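/- arXiv:2405.09811 — 4 statements merged into one kernel-verified Lean document; each statement's English description precedes it below -/
import Mathlib

section
/- For every t ≥ 1, all policy profiles π, π' ∈ Π, and all probability distributions w, w' on S, ‖(w − w')(P_π^t − P_{π'}^t)‖₁ ≤ (2^n − 1)|A||S| · t e^{−(t−1)/τ} · ‖π − π'‖_∞ · ‖w − w'‖₁. -/
open Matrix BigOperators

noncomputable section

variable {n : ℕ} {S : Type} [Fintype S] [DecidableEq S]
  {A : Fin n → Type} [∀ i, Fintype (A i)] [∀ i, DecidableEq (A i)]

/-- A stationary policy profile: each player `i` assigns to each state a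
probability distribution on her action set `A i`. -/
def IsPolicyProfile (π : ∀ i : Fin n, S → A i → ℝ) : Prop :=
  (∀ i s a, 0 ≤ π i s a) ∧ (∀ i s, ∑ a, π i s a = 1)

/-- Transition probabilities `ℙ[s' | s, a]`. -/
def IsTransition (T : S → (∀ i, A i) → S → ℝ) : Prop :=
  (∀ s a s', 0 ≤ T s a s') ∧ (∀ s a, ∑ s', T s a s' = 1)

/-- A probability distribution on `S` (as a row vector). -/
def IsDist (w : S → ℝ) : Prop := (∀ s, 0 ≤ w s) ∧ ∑ s, w s = 1

/-- The transition matrix induced by a policy profile: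
`P_π(s'|s) = ∑_a ℙ[s'|s,a] ∏_j π_j(a_j|s)`. -/
def Pmat (T : S → (∀ i, A i) → S → ℝ) (π : ∀ i : Fin n, S → A i → ℝ) :
    Matrix S S ℝ :=
  fun s s' => ∑ a : ∀ i, A i, T s a s' * ∏ i, π i s (a i)

/-- Sup-norm distance between two policy profiles. -/
def polDist (π π' : ∀ i : Fin n, S → A i → ℝ) : ℝ :=
  ⨆ i, ⨆ s, ⨆ a, |π i s a - π' i s a|

/-- ℓ¹-norm on ℝ^S. -/
def l1 (w : S → ℝ) : ℝ := ∑ s, |w s|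

/-- The expected one-step reward vector `R_i^π`. -/
def Rvec (r : S → (∀ i, A i) → ℝ) (π : ∀ i : Fin n, S → A i → ℝ) : S → ℝ :=
  fun s => ∑ a : ∀ i, A i, (∏ j, π j s (a j)) * r s a

/-- The long-run average value `V_i(π) = ∑_s p_π(s) R_i^π(s)`, where `p` is the
stationary distribution of `P_π`. -/
def Vval (p : S → ℝ) (R : S → ℝ) : ℝ := ∑ s, p s * R s

/-- The uniform mixing assumption with mixing time `τ`. -/
def Mixing (T : S → (∀ i, A i) → S → ℝ) (τ : ℝ) : Prop :=
  ∀ π : ∀ i : Fin n, S → A i → ℝ, IsPolicyProfile π →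
    ∀ w w' : S → ℝ, IsDist w → IsDist w' →
      l1 ((w - w') ᵥ* Pmat T π) ≤ Real.exp (-(1 / τ)) * l1 (w - w')

/-- The advantage function
`adv^π_i(s,a) = r_i(s,a) − V_i(π) + ∑_{t≥1} ((e_s − p_π) P_π^t) R_i^π`. -/
def adv (T : S → (∀ i, A i) → S → ℝ) (r : S → (∀ i, A i) → ℝ)
    (π : ∀ i : Fin n, S → A i → ℝ) (p : S → ℝ) (s : S) (a : ∀ i, A i) : ℝ :=
  r s a - Vval p (Rvec r π)
    + ∑' t : ℕ, ((Pi.single s 1 - p) ᵥ* (Pmat T π ^ (t + 1))) ⬝ᵥ (Rvec r π)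

/-- The average advantage function
`\bar adv^π_i(s, a_i) = ∑_{a_{-i}} (∏_{j≠i} π_j(a_j|s)) adv^π_i(s,(a_i,a_{-i}))`. -/
def avgAdv (T : S → (∀ i, A i) → S → ℝ) (r : S → (∀ i, A i) → ℝ)
    (π : ∀ i : Fin n, S → A i → ℝ) (p : S → ℝ) (i : Fin n) (s : S) (ai : A i) : ℝ :=
  ∑ a : ∀ j, A j,
    if a i = ai then (∏ j ∈ Finset.univ.erase i, π j s (a j)) * adv T r π p s a
    else 0


/-! The difference of powers telescopes, `P^(t+1) - Q^(t+1) = P^t (P - Q) + (P^t - Q^t) Q`.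
Stochastic matrices preserve the total mass of a vector, so `w - w'` and all its images have
mass zero, and on such vectors the mixing assumption contracts each step by `e^{-1/τ}`
(every mass-zero vector is a multiple of a difference of two distributions). Only the one-step
perturbation `P_π - P_{π'}` is not contracted; its entries are at most `|A| n ‖π - π'‖_∞`,
because products of numbers in `[0, 1]` are `1`-Lipschitz in each factor; the factor `2^n - 1`
of the statement enters only through `n ≤ 2^n - 1`. -/

section MassZero

omit [DecidableEq S] [∀ i, DecidableEq (A i)]

theorem l1_nonneg (v : S → ℝ) : 0 ≤ l1 v :=
  Finset.sum_nonneg fun _ _ => abs_nonneg _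

theorem l1_add_le (u v : S → ℝ) : l1 (u + v) ≤ l1 u + l1 v := by
  rw [l1, l1, l1, ← Finset.sum_add_distrib]
  exact Finset.sum_le_sum fun s _ => abs_add_le _ _

theorem l1_smul (c : ℝ) (v : S → ℝ) : l1 (c • v) = |c| * l1 v := by
  simp [l1, abs_mul, Finset.mul_sum]

theorem l1_vecMul_le_of_abs_le {M : Matrix S S ℝ} {C : ℝ} (hM : ∀ s s', |M s s'| ≤ C)
    (v : S → ℝ) : l1 (v ᵥ* M) ≤ Fintype.card S * C * l1 v := by
  have hentry : ∀ s', |(v ᵥ* M) s'| ≤ ∑ s, |v s| * C := fun s' =>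
    (Finset.abs_sum_le_sum_abs _ _).trans <| Finset.sum_le_sum fun s _ => by
      rw [abs_mul]; exact mul_le_mul_of_nonneg_left (hM s s') (abs_nonneg _)
  calc l1 (v ᵥ* M) ≤ ∑ _s' : S, ∑ s, |v s| * C := Finset.sum_le_sum fun s' _ => hentry s'
    _ = Fintype.card S * C * l1 v := by
      rw [Finset.sum_const, Finset.card_univ, nsmul_eq_mul, ← Finset.sum_mul, l1]; ring

theorem sum_vecMul_of_mulVec_one {M : Matrix S S ℝ} (hM : M *ᵥ 1 = 1) (v : S → ℝ) :
    ∑ s, (v ᵥ* M) s = ∑ s, v s := by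
  rw [← dotProduct_one, ← dotProduct_mulVec, hM, dotProduct_one]

theorem l1_vecMul_le_of_sum_eq_zero {M : Matrix S S ℝ} {c : ℝ}
    (hM : ∀ w w', IsDist w → IsDist w' → l1 ((w - w') ᵥ* M) ≤ c * l1 (w - w'))
    {v : S → ℝ} (hv : ∑ s, v s = 0) : l1 (v ᵥ* M) ≤ c * l1 v := by
  set m := ∑ s, (v s)⁺
  have hmass : ∑ s, (v s)⁻ = m := by
    have : ∑ s, ((v s)⁺ - (v s)⁻) = 0 := by simpa only [posPart_sub_negPart] using hv
    rw [Finset.sum_sub_distrib] at this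
    linarith
  rcases (Finset.sum_nonneg fun s _ => posPart_nonneg (v s) : 0 ≤ m).eq_or_lt with hm | hm
  · have hv0 : v = 0 := funext fun s => by
      have hpos := (Finset.sum_eq_zero_iff_of_nonneg fun s _ => posPart_nonneg (v s)).1 hm.symm
      have hneg := (Finset.sum_eq_zero_iff_of_nonneg fun s _ => negPart_nonneg (v s)).1
        (hmass.trans hm.symm)
      rw [← posPart_sub_negPart (v s), hpos s (Finset.mem_univ s), hneg s (Finset.mem_univ s)]
      simp
    simp [hv0, l1]
  · set w : S → ℝ := fun s => (v s)⁺ / m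
    set w' : S → ℝ := fun s => (v s)⁻ / m
    have hw : IsDist w :=
      ⟨fun s => div_nonneg (posPart_nonneg _) hm.le, by rw [← Finset.sum_div, div_self hm.ne']⟩
    have hw' : IsDist w' :=
      ⟨fun s => div_nonneg (negPart_nonneg _) hm.le, by rw [← Finset.sum_div, hmass, div_self hm.ne']⟩
    have hvw : v = m • (w - w') := funext fun s => by
      simp only [w, w', Pi.smul_apply, Pi.sub_apply, smul_eq_mul, ← sub_div, posPart_sub_negPart]
      exact (mul_div_cancel₀ _ hm.ne').symm
    rw [hvw, smul_vecMul, l1_smul, l1_smul, abs_of_pos hm]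
    calc m * l1 ((w - w') ᵥ* M) ≤ m * (c * l1 (w - w')) := by gcongr; exact hM w w' hw hw'
      _ = c * (m * l1 (w - w')) := by ring

end MassZero

section Powers

omit [∀ i, DecidableEq (A i)]

variable {P Q : Matrix S S ℝ} {c D : ℝ}

theorem pow_mulVec_one (hP : P *ᵥ 1 = 1) (k : ℕ) : P ^ k *ᵥ 1 = 1 := by
  induction k with
  | zero => rw [pow_zero, one_mulVec]
  | succ k ih => rw [pow_succ, ← mulVec_mulVec, hP, ih]

theorem l1_vecMul_pow_le (hP : P *ᵥ 1 = 1) (hc : 0 ≤ c)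
    (hPc : ∀ v : S → ℝ, ∑ s, v s = 0 → l1 (v ᵥ* P) ≤ c * l1 v)
    {v : S → ℝ} (hv : ∑ s, v s = 0) (k : ℕ) : l1 (v ᵥ* P ^ k) ≤ c ^ k * l1 v := by
  induction k with
  | zero => simp
  | succ k ih =>
    have hvk : ∑ s, (v ᵥ* P ^ k) s = 0 := by rw [sum_vecMul_of_mulVec_one (pow_mulVec_one hP k), hv]
    calc l1 (v ᵥ* P ^ (k + 1)) = l1 ((v ᵥ* P ^ k) ᵥ* P) := by rw [pow_succ, vecMul_vecMul]
      _ ≤ c * (c ^ k * l1 v) := (hPc _ hvk).trans (mul_le_mul_of_nonneg_left ih hc)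
      _ = c ^ (k + 1) * l1 v := by ring

theorem l1_vecMul_pow_sub_pow_le (hP : P *ᵥ 1 = 1) (hQ : Q *ᵥ 1 = 1) (hc : 0 ≤ c)
    (hPc : ∀ v : S → ℝ, ∑ s, v s = 0 → l1 (v ᵥ* P) ≤ c * l1 v)
    (hQc : ∀ v : S → ℝ, ∑ s, v s = 0 → l1 (v ᵥ* Q) ≤ c * l1 v)
    (hD : 0 ≤ D) (hPQ : ∀ u : S → ℝ, l1 (u ᵥ* (P - Q)) ≤ D * l1 u)
    {v : S → ℝ} (hv : ∑ s, v s = 0) (t : ℕ) :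
    l1 (v ᵥ* (P ^ (t + 1) - Q ^ (t + 1))) ≤ (t + 1) * D * c ^ t * l1 v := by
  induction t with
  | zero => simpa using hPQ v
  | succ t ih =>
    have hdiff : ∑ s, (v ᵥ* (P ^ (t + 1) - Q ^ (t + 1))) s = 0 := by
      rw [vecMul_sub, Pi.sub_def, Finset.sum_sub_distrib,
        sum_vecMul_of_mulVec_one (pow_mulVec_one hP _),
        sum_vecMul_of_mulVec_one (pow_mulVec_one hQ _), sub_self]
    have hsplit : P ^ (t + 1 + 1) - Q ^ (t + 1 + 1) =
        P ^ (t + 1) * (P - Q) + (P ^ (t + 1) - Q ^ (t + 1)) * Q := by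
      rw [pow_succ P (t + 1), pow_succ Q (t + 1)]; noncomm_ring
    calc l1 (v ᵥ* (P ^ (t + 1 + 1) - Q ^ (t + 1 + 1)))
        ≤ l1 ((v ᵥ* P ^ (t + 1)) ᵥ* (P - Q)) + l1 ((v ᵥ* (P ^ (t + 1) - Q ^ (t + 1))) ᵥ* Q) := by
          rw [hsplit, vecMul_add, ← vecMul_vecMul, ← vecMul_vecMul]; exact l1_add_le _ _
      _ ≤ D * (c ^ (t + 1) * l1 v) + c * ((t + 1) * D * c ^ t * l1 v) := by
          gcongr
          · exact (hPQ _).trans (mul_le_mul_of_nonneg_left (l1_vecMul_pow_le hP hc hPc hv _) hD)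
          · exact (hQc _ hdiff).trans (mul_le_mul_of_nonneg_left ih hc)
      _ = ((t + 1 : ℕ) + 1) * D * c ^ (t + 1) * l1 v := by push_cast; ring

end Powers

section Policies

omit [DecidableEq S] [∀ i, DecidableEq (A i)]

theorem le_one_of_sum_eq_one {ι : Type*} [Fintype ι] {f : ι → ℝ} (hf : ∀ i, 0 ≤ f i)
    (h1 : ∑ i, f i = 1) (i : ι) : f i ≤ 1 :=
  h1 ▸ Finset.single_le_sum (fun j _ => hf j) (Finset.mem_univ i)

theorem abs_prod_sub_prod_le {ι : Type*} (s : Finset ι) {f g : ι → ℝ}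
    (hf : ∀ i ∈ s, |f i| ≤ 1) (hg : ∀ i ∈ s, |g i| ≤ 1) :
    |∏ i ∈ s, f i - ∏ i ∈ s, g i| ≤ ∑ i ∈ s, |f i - g i| := by
  induction s using Finset.cons_induction with
  | empty => simp
  | cons a s _ ih =>
    simp only [Finset.mem_cons, forall_eq_or_imp] at hf hg
    have hgs : |∏ i ∈ s, g i| ≤ 1 := by
      rw [Finset.abs_prod]
      exact Finset.prod_le_one (fun i _ => abs_nonneg _) hg.2
    rw [Finset.prod_cons, Finset.prod_cons, Finset.sum_cons]
    calc |f a * ∏ i ∈ s, f i - g a * ∏ i ∈ s, g i|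
        = |f a * (∏ i ∈ s, f i - ∏ i ∈ s, g i) + (f a - g a) * ∏ i ∈ s, g i| := by ring_nf
      _ ≤ |f a| * |∏ i ∈ s, f i - ∏ i ∈ s, g i| + |f a - g a| * |∏ i ∈ s, g i| := by
          rw [← abs_mul, ← abs_mul]; exact abs_add_le _ _
      _ ≤ 1 * ∑ i ∈ s, |f i - g i| + |f a - g a| * 1 := by
          gcongr
          · exact hf.1
          · exact ih hf.2 hg.2
      _ = |f a - g a| + ∑ i ∈ s, |f i - g i| := by ring

theorem abs_le_polDist (π π' : ∀ i : Fin n, S → A i → ℝ) (i : Fin n) (s : S) (a : A i) :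
    |π i s a - π' i s a| ≤ polDist π π' :=
  calc |π i s a - π' i s a| ≤ ⨆ b, |π i s b - π' i s b| :=
        le_ciSup (Finite.bddAbove_range fun b => |π i s b - π' i s b|) a
    _ ≤ ⨆ u, ⨆ b, |π i u b - π' i u b| :=
        le_ciSup (Finite.bddAbove_range fun u => ⨆ b, |π i u b - π' i u b|) s
    _ ≤ polDist π π' :=
        le_ciSup (Finite.bddAbove_range fun j => ⨆ u, ⨆ b : A j, |π j u b - π' j u b|) i

omit [Fintype S] [∀ i, Fintype (A i)] in
theorem polDist_nonneg (π π' : ∀ i : Fin n, S → A i → ℝ) : 0 ≤ polDist π π' :=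
  Real.iSup_nonneg fun _ => Real.iSup_nonneg fun _ => Real.iSup_nonneg fun _ => abs_nonneg _

variable {T : S → (∀ i, A i) → S → ℝ} {π π' : ∀ i : Fin n, S → A i → ℝ}

theorem Pmat_mulVec_one (hT : IsTransition T) (hπ : IsPolicyProfile π) : Pmat T π *ᵥ 1 = 1 := by
  ext s
  calc (Pmat T π *ᵥ 1) s = ∑ a : ∀ i, A i, (∑ s', T s a s') * ∏ i, π i s (a i) := by
        simp only [mulVec, dotProduct, Pmat, Pi.one_apply, mul_one, Finset.sum_mul]
        exact Finset.sum_comm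
    _ = ∏ i, ∑ b, π i s b := by simp only [hT.2, one_mul, Fintype.prod_sum]
    _ = 1 := by simp [hπ.2]

theorem abs_Pmat_sub_Pmat_le (hT : IsTransition T) (hπ : IsPolicyProfile π)
    (hπ' : IsPolicyProfile π') (s s' : S) :
    |Pmat T π s s' - Pmat T π' s s'| ≤ Fintype.card (∀ i, A i) * (n * polDist π π') := by
  have hprod : ∀ a : ∀ i, A i, |∏ i, π i s (a i) - ∏ i, π' i s (a i)| ≤ n * polDist π π' :=
    fun a => calc
      _ ≤ ∑ i, |π i s (a i) - π' i s (a i)| := abs_prod_sub_prod_le _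
          (fun i _ => abs_le.2 ⟨by linarith [hπ.1 i s (a i)],
            le_one_of_sum_eq_one (hπ.1 i s) (hπ.2 i s) _⟩)
          (fun i _ => abs_le.2 ⟨by linarith [hπ'.1 i s (a i)],
            le_one_of_sum_eq_one (hπ'.1 i s) (hπ'.2 i s) _⟩)
      _ ≤ ∑ _i : Fin n, polDist π π' := Finset.sum_le_sum fun i _ => abs_le_polDist π π' i s _
      _ = n * polDist π π' := by simp
  calc |Pmat T π s s' - Pmat T π' s s'|
      = |∑ a : ∀ i, A i, T s a s' * (∏ i, π i s (a i) - ∏ i, π' i s (a i))| := by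
        simp only [Pmat, ← Finset.sum_sub_distrib, mul_sub]
    _ ≤ ∑ _a : ∀ i, A i, n * polDist π π' := by
        refine (Finset.abs_sum_le_sum_abs _ _).trans (Finset.sum_le_sum fun a _ => ?_)
        rw [abs_mul, abs_of_nonneg (hT.1 s a s')]
        exact (mul_le_of_le_one_left (abs_nonneg _)
          (le_one_of_sum_eq_one (hT.1 s a) (hT.2 s a) s')).trans (hprod a)
    _ = Fintype.card (∀ i, A i) * (n * polDist π π') := by simp

theorem l1_vecMul_Pmat_sub_Pmat_le (hT : IsTransition T) (hπ : IsPolicyProfile π)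
    (hπ' : IsPolicyProfile π') (u : S → ℝ) :
    l1 (u ᵥ* (Pmat T π - Pmat T π')) ≤
      ((2 : ℝ) ^ n - 1) * Fintype.card (∀ i, A i) * Fintype.card S * polDist π π' * l1 u := by
  have hn : (n : ℝ) ≤ 2 ^ n - 1 := by
    have : ((n + 1 : ℕ) : ℝ) ≤ (2 ^ n : ℕ) := by exact_mod_cast Nat.lt_two_pow_self
    push_cast at this; linarith
  refine (l1_vecMul_le_of_abs_le (fun s s' => abs_Pmat_sub_Pmat_le hT hπ hπ' s s') u).trans ?_
  have := polDist_nonneg π π'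
  calc Fintype.card S * (Fintype.card (∀ i, A i) * (n * polDist π π')) * l1 u
      = Fintype.card (∀ i, A i) * Fintype.card S * (n * polDist π π') * l1 u := by ring
    _ ≤ Fintype.card (∀ i, A i) * Fintype.card S * ((2 ^ n - 1) * polDist π π') * l1 u := by
      gcongr
      exact l1_nonneg u
    _ = _ := by ring

theorem Mixing.l1_vecMul_le {τ : ℝ} (hmix : Mixing T τ) (hπ : IsPolicyProfile π) {v : S → ℝ}
    (hv : ∑ s, v s = 0) : l1 (v ᵥ* Pmat T π) ≤ Real.exp (-(1 / τ)) * l1 v :=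
  l1_vecMul_le_of_sum_eq_zero (hmix π hπ) hv

end Policies

theorem transition_pow_lipschitz_general
    (T : S → (∀ i, A i) → S → ℝ) (hT : IsTransition T)
    (τ : ℝ) (hmix : Mixing T τ)
    (π π' : ∀ i : Fin n, S → A i → ℝ)
    (hπ : IsPolicyProfile π) (hπ' : IsPolicyProfile π')
    (w w' : S → ℝ) (hw : IsDist w) (hw' : IsDist w')
    (t : ℕ) (ht : 1 ≤ t) :
    l1 ((w - w') ᵥ* (Pmat T π ^ t - Pmat T π' ^ t)) ≤
      ((2 : ℝ) ^ n - 1) * (Fintype.card (∀ i, A i) : ℝ) * (Fintype.card S : ℝ) * (t : ℝ) * Real.exp (-((t : ℝ) - 1) / τ) *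
        polDist π π' * l1 (w - w') := by
  obtain ⟨k, rfl⟩ := Nat.exists_eq_add_of_le' ht
  have hv : ∑ s, (w - w') s = 0 := by
    simp only [Pi.sub_apply, Finset.sum_sub_distrib, hw.2, hw'.2, sub_self]
  have hD : 0 ≤ ((2 : ℝ) ^ n - 1) * Fintype.card (∀ i, A i) * Fintype.card S * polDist π π' := by
    have h2n : (0 : ℝ) ≤ 2 ^ n - 1 := sub_nonneg.2 (one_le_pow₀ one_le_two)
    have := polDist_nonneg π π'
    positivity
  have key := l1_vecMul_pow_sub_pow_le (Pmat_mulVec_one hT hπ) (Pmat_mulVec_one hT hπ')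
    (Real.exp_pos _).le (fun _ => hmix.l1_vecMul_le hπ) (fun _ => hmix.l1_vecMul_le hπ') hD
    (l1_vecMul_Pmat_sub_Pmat_le hT hπ hπ') hv k
  have hexp : Real.exp (-(1 / τ)) ^ k = Real.exp (-(((k + 1 : ℕ) : ℝ) - 1) / τ) := by
    rw [← Real.exp_nat_mul]; push_cast; ring_nf
  rw [hexp] at key
  push_cast at key ⊢
  linarith

/-- Lipschitz bound for powers of the induced transition matrices. -/
theorem transition_pow_lipschitz
    (T : S → (∀ i, A i) → S → ℝ) (hT : IsTransition T)
    (τ : ℝ) (hτ : 0 < τ) (hmix : Mixing T τ)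
    (π π' : ∀ i : Fin n, S → A i → ℝ)
    (hπ : IsPolicyProfile π) (hπ' : IsPolicyProfile π')
    (w w' : S → ℝ) (hw : IsDist w) (hw' : IsDist w')
    (t : ℕ) (ht : 1 ≤ t) :
    l1 ((w - w') ᵥ* (Pmat T π ^ t - Pmat T π' ^ t)) ≤
      ((2 : ℝ) ^ n - 1) * (Fintype.card (∀ i, A i) : ℝ) * (Fintype.card S : ℝ) * (t : ℝ) * Real.exp (-((t : ℝ) - 1) / τ) *
        polDist π π' * l1 (w - w') :=
  transition_pow_lipschitz_general T hT τ hmix π π' hπ hπ' w w' hw hw' t ht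

end
end

section
/- For every p ∈ X and every y ∈ ℝ^d, the Fenchel coupling satisfies F(p, y) ≥ (K/2) ‖Q(y) − p‖². -/
open scoped RealInnerProductSpace
open Filter Set Topology

/-!
Subtracting the linear function `⟪y, ·⟫` preserves `K`-strong convexity, `Q y` minimises
`g = h - ⟪y, ·⟫` on `X`, and `F(p, y) = g p - g (Q y)`. Comparing `g (Q y)` with `g` at the
point `t • p + (1 - t) • Q y`, strong convexity gives `(1 - t) K/2 ‖p - Q y‖² ≤ g p - g (Q y)`
for every `t ∈ (0, 1]`; let `t → 0`.
-/

variable {E : Type*} [NormedAddCommGroup E] [InnerProductSpace ℝ E] {s : Set E} {m : ℝ}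
  {f : E → ℝ}

lemma StrongConvexOn.sub_inner (hf : StrongConvexOn s m f) (y : E) :
    StrongConvexOn s m (fun z ↦ f z - ⟪y, z⟫) := by
  have h := hf.sub ((innerₛₗ ℝ y).concaveOn hf.1).uniformConcaveOn_zero
  rwa [add_zero] at h

lemma StrongConvexOn.mul_sq_norm_sub_le_of_isMinOn {x p : E} (hf : StrongConvexOn s m f)
    (hx : x ∈ s) (hmin : IsMinOn f s x) (hp : p ∈ s) :
    m / 2 * ‖p - x‖ ^ 2 ≤ f p - f x := by
  have segment_bound : ∀ t ∈ Ioc (0 : ℝ) 1, (1 - t) * (m / 2 * ‖p - x‖ ^ 2) ≤ f p - f x := by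
    rintro t ⟨ht0, ht1⟩
    have h_convex := hf.2 hp hx ht0.le (sub_nonneg.2 ht1) (add_sub_cancel t 1)
    have h_le := isMinOn_iff.1 hmin _ (hf.1 hp hx ht0.le (sub_nonneg.2 ht1) (add_sub_cancel t 1))
    rw [smul_eq_mul, smul_eq_mul] at h_convex
    refine le_of_mul_le_mul_left ?_ ht0
    linarith
  have hlim : Tendsto (fun t : ℝ ↦ (1 - t) * (m / 2 * ‖p - x‖ ^ 2)) (𝓝[>] 0)
      (𝓝 (m / 2 * ‖p - x‖ ^ 2)) := by
    have : Continuous (fun t : ℝ ↦ (1 - t) * (m / 2 * ‖p - x‖ ^ 2)) := by fun_prop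
    simpa using (this.tendsto 0).mono_left nhdsWithin_le_nhds
  exact le_of_tendsto hlim (eventually_of_mem (Ioc_mem_nhdsGT one_pos) segment_bound)

theorem fenchel_coupling_lower_bound_general {d : ℕ}
    (X : Set (EuclideanSpace ℝ (Fin d)))
    (hXconv : Convex ℝ X)
    (h : EuclideanSpace ℝ (Fin d) → ℝ) (K : ℝ)
    (hsc : ∀ x ∈ X, ∀ x' ∈ X, ∀ l ∈ Set.Icc (0 : ℝ) 1,
      h (l • x + (1 - l) • x') ≤
        l * h x + (1 - l) * h x' - K / 2 * l * (1 - l) * ‖x - x'‖ ^ 2)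
    (Q : EuclideanSpace ℝ (Fin d) → EuclideanSpace ℝ (Fin d))
    (hQmem : ∀ y, Q y ∈ X)
    (hQmax : ∀ y, ∀ x ∈ X, ⟪y, x⟫ - h x ≤ ⟪y, Q y⟫ - h (Q y))
    (hstar : EuclideanSpace ℝ (Fin d) → ℝ)
    (hhstar : ∀ y, hstar y = ⟪y, Q y⟫ - h (Q y))
    (F : EuclideanSpace ℝ (Fin d) → EuclideanSpace ℝ (Fin d) → ℝ)
    (hF : ∀ p y, F p y = h p + hstar y - ⟪y, p⟫)
    (p : EuclideanSpace ℝ (Fin d)) (hp : p ∈ X)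
    (y : EuclideanSpace ℝ (Fin d)) :
    K / 2 * ‖Q y - p‖ ^ 2 ≤ F p y := by
  have h_strong : StrongConvexOn X K h := by
    refine ⟨hXconv, fun x hx x' hx' a b ha hb hab ↦ ?_⟩
    obtain rfl : b = 1 - a := by linarith
    have := hsc x hx x' hx' a ⟨ha, by linarith⟩
    simp only [smul_eq_mul]
    linarith
  have h_min : IsMinOn (fun z ↦ h z - ⟪y, z⟫) X (Q y) :=
    isMinOn_iff.2 fun x hx ↦ by linarith [hQmax y x hx]
  have h_gap := (h_strong.sub_inner y).mul_sq_norm_sub_le_of_isMinOn (hQmem y) h_min hp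
  rw [hF, hhstar, norm_sub_rev]
  linarith

/-- The Fenchel coupling `F(p,y) = h(p) + h*(y) − ⟨y,p⟩` of a `K`-strongly convex
regularizer `h` on a compact convex set `X` bounds `(K/2)‖Q(y) − p‖²` from above,
where `Q` is the induced mirror map. -/
theorem fenchel_coupling_lower_bound {d : ℕ}
    (X : Set (EuclideanSpace ℝ (Fin d))) (hXc : IsCompact X)
    (hXconv : Convex ℝ X) (hXne : X.Nonempty)
    (h : EuclideanSpace ℝ (Fin d) → ℝ) (K : ℝ) (hK : 0 < K)
    (hcont : ContinuousOn h X)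
    (hsc : ∀ x ∈ X, ∀ x' ∈ X, ∀ l ∈ Set.Icc (0 : ℝ) 1,
      h (l • x + (1 - l) • x') ≤
        l * h x + (1 - l) * h x' - K / 2 * l * (1 - l) * ‖x - x'‖ ^ 2)
    (Q : EuclideanSpace ℝ (Fin d) → EuclideanSpace ℝ (Fin d))
    (hQmem : ∀ y, Q y ∈ X)
    (hQmax : ∀ y, ∀ x ∈ X, ⟪y, x⟫ - h x ≤ ⟪y, Q y⟫ - h (Q y))
    (hstar : EuclideanSpace ℝ (Fin d) → ℝ)
    (hhstar : ∀ y, hstar y = ⟪y, Q y⟫ - h (Q y))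
    (F : EuclideanSpace ℝ (Fin d) → EuclideanSpace ℝ (Fin d) → ℝ)
    (hF : ∀ p y, F p y = h p + hstar y - ⟪y, p⟫)
    (p : EuclideanSpace ℝ (Fin d)) (hp : p ∈ X)
    (y : EuclideanSpace ℝ (Fin d)) :
    K / 2 * ‖Q y - p‖ ^ 2 ≤ F p y :=
  fenchel_coupling_lower_bound_general X hXconv h K hsc Q hQmem hQmax hstar hhstar F hF p hp y
end

section
/- If y ∈ ℝ^d is such that Q(y) lies in the interior of X and h is differentiable at Q(y), then for every p ∈ X the Fenchel coupling equals the Bregman divergence: F(p, y) = h(p) − h(Q(y)) − ⟨∇h(Q(y)), p − Q(y)⟩. -/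
open scoped RealInnerProductSpace

/-- If `Q(y)` lies in the interior of `X` and `h` is differentiable there,
the Fenchel coupling equals the Bregman divergence:
`F(p,y) = h(p) − h(Q(y)) − ⟨∇h(Q(y)), p − Q(y)⟩`. -/
theorem fenchel_coupling_eq_bregman {d : ℕ}
    (X : Set (EuclideanSpace ℝ (Fin d))) (hXc : IsCompact X)
    (hXconv : Convex ℝ X) (hXne : X.Nonempty)
    (h : EuclideanSpace ℝ (Fin d) → ℝ) (K : ℝ) (hK : 0 < K)
    (hcont : ContinuousOn h X)
    (hsc : ∀ x ∈ X, ∀ x' ∈ X, ∀ l ∈ Set.Icc (0 : ℝ) 1,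
      h (l • x + (1 - l) • x') ≤
        l * h x + (1 - l) * h x' - K / 2 * l * (1 - l) * ‖x - x'‖ ^ 2)
    (Q : EuclideanSpace ℝ (Fin d) → EuclideanSpace ℝ (Fin d))
    (hQmem : ∀ y, Q y ∈ X)
    (hQmax : ∀ y, ∀ x ∈ X, ⟪y, x⟫ - h x ≤ ⟪y, Q y⟫ - h (Q y))
    (hstar : EuclideanSpace ℝ (Fin d) → ℝ)
    (hhstar : ∀ y, hstar y = ⟪y, Q y⟫ - h (Q y))
    (F : EuclideanSpace ℝ (Fin d) → EuclideanSpace ℝ (Fin d) → ℝ)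
    (hF : ∀ p y, F p y = h p + hstar y - ⟪y, p⟫)
    (y : EuclideanSpace ℝ (Fin d)) (hyint : Q y ∈ interior X)
    (g : EuclideanSpace ℝ (Fin d)) (hg : HasGradientAt h g (Q y))
    (p : EuclideanSpace ℝ (Fin d)) (hp : p ∈ X) :
    F p y = h p - h (Q y) - ⟪g, p - Q y⟫ := by
  -- Q y is a local max of x ↦ ⟪y,x⟫ - h x
  have hloc : IsLocalMax (fun x => ⟪y, x⟫ - h x) (Q y) := by
    filter_upwards [mem_interior_iff_mem_nhds.mp hyint] with x hx
    exact hQmax y x hx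
  have hfd : HasFDerivAt (fun x => ⟪y, x⟫ - h x)
      (innerSL ℝ y - InnerProductSpace.toDual ℝ _ g) (Q y) :=
    (innerSL ℝ y).hasFDerivAt.sub hg.hasFDerivAt
  have hzero := hloc.hasFDerivAt_eq_zero hfd
  have hyg : y = g := by
    apply ext_inner_right ℝ
    intro v
    have := congrFun (congrArg DFunLike.coe hzero) v
    simpa [InnerProductSpace.toDual, sub_eq_zero] using this
  rw [hF, hhstar, hyg, inner_sub_right]
  ring
end

section
/- Let f : ℝ^d → ℝ be differentiable with L-Lipschitz gradient, let δ > 0, and define the δ-smoothed function f^δ(x) = (1/vol(B(0,δ))) ∫_{B(0,δ)} f(x + w) dw, where B(0,δ) is the closed Euclidean ball of radius δ. Then f^δ is differentiable and ‖∇f^δ(x) − ∇f(x)‖ ≤ Lδ for every x ∈ ℝ^d. -/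
open MeasureTheory Metric

/-!
Since `∇f` is Lipschitz, `f` is `C¹`, so one may differentiate under the integral sign: the
derivative of `f^δ` at `x` is the average of `Df` over the ball `x + B(0, δ)`. Each value
`Df (x + w)` lies in the closed ball of radius `L‖w‖ ≤ Lδ` about `Df x`, and that ball is convex
and closed, so it contains the average as well. The Riesz isometry turns this back into the
statement about gradients.
-/

section Averaging

variable {E F : Type*} [NormedAddCommGroup E] [NormedSpace ℝ E] [NormedAddCommGroup F]
  [NormedSpace ℝ F] [MeasurableSpace E] [BorelSpace E] [ProperSpace E]
  {μ : Measure E} [IsFiniteMeasureOnCompacts μ] {f : E → F} {s : Set E}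

theorem hasFDerivAt_setIntegral_comp_add (hf : ContDiff ℝ 1 f) (hs : IsCompact s) (x₀ : E) :
    HasFDerivAt (fun x => ∫ w in s, f (x + w) ∂μ) (∫ w in s, fderiv ℝ f (x₀ + w) ∂μ) x₀ := by
  have hDf : Continuous (fderiv ℝ f) := hf.continuous_fderiv one_ne_zero
  obtain ⟨C, hC⟩ := ((isCompact_closedBall x₀ 1).add hs).exists_bound_of_continuousOn
    hDf.continuousOn
  refine hasFDerivAt_integral_of_dominated_of_fderiv_le (ball_mem_nhds x₀ one_pos)
    (F' := fun x w => fderiv ℝ f (x + w)) (bound := fun _ => C) ?_ ?_ ?_ ?_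
    (integrableOn_const hs.measure_lt_top.ne) ?_
  · exact .of_forall fun x => (hf.continuous.comp (continuous_const_add x)).aestronglyMeasurable
  · exact (hf.continuous.comp (continuous_const_add x₀)).continuousOn.integrableOn_compact hs
  · exact (hDf.comp (continuous_const_add x₀)).aestronglyMeasurable
  · filter_upwards [ae_restrict_mem hs.measurableSet] with w hw x hx
    exact hC _ (Set.add_mem_add (ball_subset_closedBall hx) hw)
  · exact .of_forall fun w x _ =>
      (hasFDerivAt_comp_add_right w).2 ((hf.differentiable one_ne_zero) (x + w)).hasFDerivAt

theorem hasFDerivAt_setAverage_comp_add (hf : ContDiff ℝ 1 f) (hs : IsCompact s) (x₀ : E) :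
    HasFDerivAt (fun x => ⨍ w in s, f (x + w) ∂μ) (⨍ w in s, fderiv ℝ f (x₀ + w) ∂μ) x₀ := by
  simp only [setAverage_eq]
  exact (hasFDerivAt_setIntegral_comp_add hf hs x₀).const_smul _

end Averaging

theorem norm_setAverage_sub_le {α F : Type*} [MeasurableSpace α] [NormedAddCommGroup F]
    [NormedSpace ℝ F] [CompleteSpace F] {μ : Measure α} {s : Set α} {g : α → F} {c : F} {C : ℝ}
    (hs₀ : μ s ≠ 0) (hs : μ s ≠ ⊤) (hg : IntegrableOn g s μ)
    (hgc : ∀ᵐ w ∂μ.restrict s, ‖g w - c‖ ≤ C) :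
    ‖⨍ w in s, g w ∂μ - c‖ ≤ C := by
  rw [← dist_eq_norm, ← mem_closedBall]
  refine (convex_closedBall c C).set_average_mem isClosed_closedBall hs₀ hs ?_ hg
  simpa only [mem_closedBall, dist_eq_norm] using hgc

theorem norm_gradient_sub_gradient {E : Type*} [NormedAddCommGroup E] [InnerProductSpace ℝ E]
    [CompleteSpace E] (f g : E → ℝ) (x y : E) :
    ‖gradient f x - gradient g y‖ = ‖fderiv ℝ f x - fderiv ℝ g y‖ := by
  rw [gradient, gradient, ← LinearIsometryEquiv.map_sub, LinearIsometryEquiv.norm_map]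

/-- The `δ`-smoothed version of a function with `L`-Lipschitz gradient is differentiable,
and its gradient is within `Lδ` of the original gradient. -/
theorem smoothed_gradient_close {d : ℕ}
    (f : EuclideanSpace ℝ (Fin d) → ℝ) (L δ : ℝ) (hδ : 0 < δ) (hL : 0 ≤ L)
    (hf : Differentiable ℝ f)
    (hlip : ∀ x y, ‖gradient f x - gradient f y‖ ≤ L * ‖x - y‖)
    (fδ : EuclideanSpace ℝ (Fin d) → ℝ)
    (hfδ : ∀ x, fδ x =
      (volume (Metric.closedBall (0 : EuclideanSpace ℝ (Fin d)) δ)).toReal⁻¹ *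
        ∫ w in Metric.closedBall (0 : EuclideanSpace ℝ (Fin d)) δ, f (x + w)) :
    Differentiable ℝ fδ ∧ ∀ x, ‖gradient fδ x - gradient f x‖ ≤ L * δ := by
  set B := closedBall (0 : EuclideanSpace ℝ (Fin d)) δ
  have hDf : LipschitzWith ⟨L, hL⟩ (fderiv ℝ f) := LipschitzWith.of_dist_le_mul fun x y => by
    rw [dist_eq_norm, dist_eq_norm, ← norm_gradient_sub_gradient]
    exact hlip x y
  have hC1 : ContDiff ℝ 1 f := contDiff_one_iff_fderiv.2 ⟨hf, hDf.continuous⟩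
  have hfδ_avg : fδ = fun x => ⨍ w in B, f (x + w) := funext fun x => by
    rw [hfδ, setAverage_eq, smul_eq_mul, measureReal_def]
  have hderiv x : HasFDerivAt fδ (⨍ w in B, fderiv ℝ f (x + w)) x :=
    hfδ_avg ▸ hasFDerivAt_setAverage_comp_add hC1 (isCompact_closedBall 0 δ) x
  refine ⟨fun x => (hderiv x).differentiableAt, fun x => ?_⟩
  rw [norm_gradient_sub_gradient, (hderiv x).fderiv]
  refine norm_setAverage_sub_le (measure_closedBall_pos volume 0 hδ).ne'
    measure_closedBall_lt_top.ne
    ((hDf.continuous.comp (continuous_const_add x)).continuousOn.integrableOn_compact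
      (isCompact_closedBall 0 δ)) ?_
  filter_upwards [ae_restrict_mem measurableSet_closedBall] with w hw
  calc ‖fderiv ℝ f (x + w) - fderiv ℝ f x‖ ≤ L * ‖x + w - x‖ := by
        rw [← dist_eq_norm, ← dist_eq_norm]
        exact hDf.dist_le_mul (x + w) x
    _ ≤ L * δ := by
        rw [add_sub_cancel_left]
        exact mul_le_mul_of_nonneg_left (mem_closedBall_zero_iff.1 hw) hL
end
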